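/- Fix integers l ≥ 1, d ≥ 1 and a tuple c = (c_0,…,c_{l−1}) of nonnegative integers with c_0+…+c_{l−1} = d; set m_p = c_0+…+c_p, J = {j : c_j = 0}, and I_t = {p : m_p = t} for 0 ≤ t ≤ d. Let C = (C^0,…,C^{l−1}) be an l-tuple of strictly decreasing sequences of integers such that C^p stabilises with respect to some integer r_p, for each p. If D = (D^0,…,D^{l−1}) and D′ = (D′^0,…,D′^{l−1}) are both admissible tuples for C, then D^p = D′^p for every 0 ≤ p ≤ l−1. -/

import Mathlib

/-- A partition: a weakly decreasing, eventually-zero sequence of naturals.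
`part i` is the `(i+1)`-st part `λ_{i+1}`. -/
structure PartitionSeq where
  part : ℕ → ℕ
  antitone : Antitone part
  eventually_zero : ∃ N, ∀ i ≥ N, part i = 0

/-- The length `L(λ)`: the number of nonzero parts. -/
noncomputable def PartitionSeq.length (lam : PartitionSeq) : ℕ :=
  Set.ncard {i : ℕ | lam.part i ≠ 0}

/-- The size `|λ|`: the sum of the parts. -/
noncomputable def PartitionSeq.size (lam : PartitionSeq) : ℕ :=
  ∑ i ∈ Finset.range lam.length, lam.part i

/-- `beta lam r i` is the `(i+1)`-st entry `β^r(λ)_{i+1} = λ_{i+1} + r - i` of the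
`r`-shifted β-number (0-indexed version of `β^r(λ)_i = λ_i + r + 1 - i`). -/
def PartitionSeq.beta (lam : PartitionSeq) (r : ℤ) (i : ℕ) : ℤ :=
  (lam.part i : ℤ) + r - (i : ℤ)

/-- The residue `Res_λ(x) = Σ_{(a,b) ∈ Y(λ)} x^{cont(a,b)}` as a Laurent polynomial. -/
noncomputable def PartitionSeq.residue (lam : PartitionSeq) : LaurentPolynomial ℤ :=
  ∑ a ∈ Finset.range lam.length, ∑ b ∈ Finset.range (lam.part a),
    LaurentPolynomial.T ((b : ℤ) - (a : ℤ))

/-- The residue with `x ↦ x^d` substituted: `Res_λ(x^d)`. -/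
noncomputable def PartitionSeq.residuePow (lam : PartitionSeq) (d : ℕ) : LaurentPolynomial ℤ :=
  ∑ a ∈ Finset.range lam.length, ∑ b ∈ Finset.range (lam.part a),
    LaurentPolynomial.T ((d : ℤ) * ((b : ℤ) - (a : ℤ)))

/-- A strictly decreasing integer sequence `C` stabilises with respect to `r` if
`C_i = r + 1 - i` for all large `i` (0-indexed: `C i = r - i`). -/
def Stabilises (C : ℕ → ℤ) (r : ℤ) : Prop :=
  ∃ K : ℕ, ∀ i ≥ K, C i = r - (i : ℤ)

/-- The partial sum `m_p(c) = c_0 + ⋯ + c_p`. -/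
def psum {l : ℕ} (c : Fin l → ℕ) (p : Fin l) : ℕ := ∑ j ∈ Finset.Iic p, c j

/-- The multiplicity at `z ∈ ℤ` of the multiset `C_{[t]}`, for `0 ≤ t ≤ d`,
where `I_t = {p : m_p(c) = t}`; for `t = 0` or `t = d` this is the common multiset
`C_{[0]} = C_{[d]}` built from `I_0` (with entries shifted by `-1`) and `I_d`. -/
noncomputable def multAt {l : ℕ} (d : ℕ) (c : Fin l → ℕ) (C : Fin l → ℕ → ℤ)
    (t : ℕ) (z : ℤ) : ℕ :=
  if t = 0 ∨ t = d then
    Nat.card {pi : Fin l × ℕ // psum c pi.1 = 0 ∧ C pi.1 pi.2 - 1 = z} +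
    Nat.card {pi : Fin l × ℕ // psum c pi.1 = d ∧ C pi.1 pi.2 = z}
  else
    Nat.card {pi : Fin l × ℕ // psum c pi.1 = t ∧ C pi.1 pi.2 = z}

/-- The set `χ(C) = {l(C^q_i − 1) + q + 1 : 0 ≤ q ≤ l−1, i ≥ 1} ⊆ ℤ`. -/
def chiSet (l : ℕ) (C : Fin l → ℕ → ℤ) : Set ℤ :=
  {z : ℤ | ∃ (q : Fin l) (i : ℕ), z = (l : ℤ) * (C q i - 1) + (q : ℤ) + 1}

/-- `Ct` is an admissible tuple for `C` (with respect to the data `d`, `c`):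
(i) each `Ct p` is strictly decreasing; (ii) the multisets `Ct_{[t]}` and `C_{[t]}`
agree for all `0 ≤ t ≤ d`; (iii) for `0 ≠ p ∈ J = {j : c_j = 0}`, every term of `Ct p`
is a term of `Ct (p-1)`; (iv) if `0 ∈ J`, then for every term `z` of `Ct 0`,
`z - 1` is a term of `Ct (l-1)`. -/
def IsAdmissible {l : ℕ} (d : ℕ) (c : Fin l → ℕ) (C Ct : Fin l → ℕ → ℤ) : Prop :=
  (∀ p : Fin l, StrictAnti (Ct p)) ∧
  (∀ t ≤ d, ∀ z : ℤ, multAt d c Ct t z = multAt d c C t z) ∧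
  (∀ p : Fin l, c p = 0 → (p : ℕ) ≠ 0 →
    ∀ i : ℕ, ∃ i' : ℕ,
      Ct ⟨(p : ℕ) - 1, lt_of_le_of_lt (Nat.sub_le _ _) p.isLt⟩ i' = Ct p i) ∧
  (∀ h0 : 0 < l, c ⟨0, h0⟩ = 0 →
    ∀ i : ℕ, ∃ i' : ℕ, Ct ⟨l - 1, Nat.sub_lt h0 Nat.one_pos⟩ i' = Ct ⟨0, h0⟩ i - 1)

/-- The Young diagram of a partition, with 0-indexed nodes:
`(a,b)` is a node iff `b < λ_{a+1}`. -/
def YoungSet (lam : PartitionSeq) : Set (ℕ × ℕ) :=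
  {ab : ℕ × ℕ | ab.2 < lam.part ab.1}

/-- `S` is the Young diagram of the partition `mu`. -/
def IsDiagramOf (S : Set (ℕ × ℕ)) (mu : PartitionSeq) : Prop :=
  S = YoungSet mu

/-- The node `ab` of `Y(λ)` is removable: deleting it leaves the Young diagram
of some partition. -/
def IsRemovableNode (lam : PartitionSeq) (ab : ℕ × ℕ) : Prop :=
  ab ∈ YoungSet lam ∧ ∃ mu : PartitionSeq, IsDiagramOf (YoungSet lam \ {ab}) mu

/-- The node `ab` of `Y(λ)` is `j`-removable (mod `l`): it is removable and its
content is congruent to `j` mod `l`. -/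
def IsJRemovable (l j : ℕ) (lam : PartitionSeq) (ab : ℕ × ℕ) : Prop :=
  IsRemovableNode lam ab ∧ ((ab.2 : ℤ) - (ab.1 : ℤ)) ≡ (j : ℤ) [ZMOD (l : ℤ)]

/-- The node `ab` is `J`-removable for a set `J` of residues: `j`-removable
for some `j ∈ J`. -/
def IsSetRemovable (l : ℕ) (J : Set ℕ) (lam : PartitionSeq) (ab : ℕ × ℕ) : Prop :=
  ∃ j ∈ J, IsJRemovable l j lam ab

/-- `mu` is obtained from `lam` by deleting a single `J`-removable node. -/
def RemoveStep (l : ℕ) (J : Set ℕ) (lam mu : PartitionSeq) : Prop :=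
  ∃ ab : ℕ × ℕ, IsSetRemovable l J lam ab ∧ IsDiagramOf (YoungSet lam \ {ab}) mu

/-- The partial sum `m_p(θ) = θ_0 + ⋯ + θ_p` of a rational vector. -/
def psumQ {l : ℕ} (θ : Fin l → ℚ) (p : Fin l) : ℚ := ∑ j ∈ Finset.Iic p, θ j

/-- The map `s_i : ℚ^l → ℚ^l` (for `1 ≤ i ≤ l-1`). -/
def sAct {l : ℕ} (i : Fin l) (θ : Fin l → ℚ) : Fin l → ℚ := fun p =>
  if (p : ℕ) = (i : ℕ) - 1 then θ p + θ i
  else if p = i then -θ i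
  else if (p : ℕ) = (i : ℕ) + 1 then θ i + θ p
  else θ p


/-! Within a block `I_t = {p : m_p = t}` the condition (iii) makes the ranges of `D^p` a
decreasing chain, and (iv) continues the chain of `I_d` into that of `I_0` after a shift by
one. So a value `z` is a term of `D^p` exactly when its multiplicity in `D_{[t]}` reaches the
position of `p` in the chain, which by (ii) depends only on `C`. A strictly decreasing
sequence is determined by its set of terms. -/

open Set Function

theorem StrictAnti.range_inj_of_wellFoundedLT {β γ : Type*} [LinearOrder β] [WellFoundedLT β]
    [Preorder γ] {f g : β → γ} (hf : StrictAnti f) (hg : StrictAnti g) :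
    range f = range g ↔ f = g := by
  have key := hf.dual_right.range_inj hg.dual_right
  rwa [range_comp, range_comp, (image_injective.2 OrderDual.toDual.injective).eq_iff,
    OrderDual.toDual.injective.comp_left.eq_iff] at key

theorem mem_iff_add_ncard_le_add_ncard {α : Type*} [LinearOrder α] [Finite α] {I S : Set α}
    (hSI : S ⊆ I) (hS : ∀ q ∈ I, ∀ p ∈ S, q ≤ p → q ∈ S) {p : α} (hp : p ∈ I) {m n : ℕ}
    (hmem : p ∈ S → n ≤ m) (hnot : p ∉ S → m ≤ n) :
    p ∈ S ↔ n + {q ∈ I | q ≤ p}.ncard ≤ m + S.ncard := by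
  constructor
  · intro hpS
    have : {q ∈ I | q ≤ p} ⊆ S := fun q hq => hS q hq.1 p hpS hq.2
    have := ncard_le_ncard this
    have := hmem hpS
    omega
  · intro hle
    by_contra hpS
    have hsub : S ⊂ {q ∈ I | q ≤ p} := by
      refine ssubset_iff_subset_ne.2 ⟨fun q hq => ⟨hSI hq, ?_⟩, fun h => hpS (h ▸ ⟨hp, le_rfl⟩)⟩
      exact le_of_not_gt fun hpq => hpS (hS p hp q hq hpq.le)
    have := ncard_lt_ncard hsub
    have := hnot hpS
    omega

theorem natCard_pairs_eq_ncard {ι κ α : Type*} (f : ι → κ → α) (hf : ∀ i, Injective (f i))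
    (P : ι → Prop) (z : α) :
    Nat.card {x : ι × κ // P x.1 ∧ f x.1 x.2 = z} = {i | P i ∧ z ∈ range (f i)}.ncard := by
  rw [← Nat.card_coe_set_eq]
  refine Nat.card_eq_of_bijective (fun x => ⟨x.1.1, x.2.1, x.1.2, x.2.2⟩) ⟨?_, ?_⟩
  · rintro ⟨⟨i, k⟩, _, hk⟩ ⟨⟨i', k'⟩, _, hk'⟩ h
    obtain rfl : i = i' := congrArg Subtype.val h
    obtain rfl : k = k' := hf i (hk.trans hk'.symm)
    rfl
  · rintro ⟨i, hP, k, hk⟩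
    exact ⟨⟨(i, k), hP, hk⟩, rfl⟩

section Psum

variable {l : ℕ} (c : Fin l → ℕ)

theorem psum_mono : Monotone (psum c) :=
  fun _ _ h => Finset.sum_le_sum_of_subset (Finset.Iic_subset_Iic.2 h)

theorem le_psum (p : Fin l) : c p ≤ psum c p :=
  Finset.single_le_sum (fun _ _ => Nat.zero_le _) (Finset.mem_Iic.2 le_rfl)

theorem psum_le_sum (p : Fin l) : psum c p ≤ ∑ j, c j :=
  Finset.sum_le_sum_of_subset (Finset.subset_univ _)

theorem psum_last (hl : 0 < l) : psum c ⟨l - 1, Nat.sub_lt hl Nat.one_pos⟩ = ∑ j, c j := by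
  rw [psum]
  congr 1
  ext q
  simpa [Fin.le_def] using Nat.le_sub_one_of_lt q.isLt

theorem psum_succ {k : ℕ} (hk : k + 1 < l) :
    psum c ⟨k + 1, hk⟩ = psum c ⟨k, Nat.lt_of_succ_lt hk⟩ + c ⟨k + 1, hk⟩ := by
  have : Finset.Iic (⟨k + 1, hk⟩ : Fin l) =
      insert ⟨k + 1, hk⟩ (Finset.Iic (⟨k, Nat.lt_of_succ_lt hk⟩ : Fin l)) := by
    ext q
    simp only [Finset.mem_Iic, Finset.mem_insert, Fin.le_def, Fin.ext_iff]
    omega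
  rw [psum, this, Finset.sum_insert (by simp [Fin.le_def]), add_comm]
  rfl

end Psum

section Multiplicity

variable {l d : ℕ} {c : Fin l → ℕ} {D : Fin l → ℕ → ℤ}

theorem multAt_of_ne (hD : ∀ p, StrictAnti (D p)) {t : ℕ} (h0 : t ≠ 0) (hd : t ≠ d) (z : ℤ) :
    multAt d c D t z = {p | psum c p = t ∧ z ∈ range (D p)}.ncard := by
  rw [multAt, if_neg (not_or.2 ⟨h0, hd⟩)]
  exact natCard_pairs_eq_ncard D (fun p => (hD p).injective) (fun p => psum c p = t) z

theorem multAt_zero (hD : ∀ p, StrictAnti (D p)) (z : ℤ) :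
    multAt d c D 0 z = {p | psum c p = 0 ∧ z + 1 ∈ range (D p)}.ncard
      + {p | psum c p = d ∧ z ∈ range (D p)}.ncard := by
  have hshift : ∀ p, z ∈ range (fun i => D p i - 1) ↔ z + 1 ∈ range (D p) := fun p => by
    simp only [mem_range, sub_eq_iff_eq_add]
  have hI := natCard_pairs_eq_ncard (fun p i => D p i - 1)
    (fun p => sub_left_injective.comp (hD p).injective) (fun p => psum c p = 0) z
  simp only [hshift] at hI
  rw [multAt, if_pos (Or.inl rfl), hI,
    natCard_pairs_eq_ncard D (fun p => (hD p).injective) (fun p => psum c p = d)]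

theorem multAt_self (z : ℤ) : multAt d c D d z = multAt d c D 0 z := by
  simp only [multAt, or_true, true_or, if_true]

end Multiplicity

/-- The multiplicity in `C_{[m_p]}` from which on a value is a term of `D^p`: the position of `p`
in the chain `I_{m_p}`, where `C_{[0]}` runs through all of `I_d` before `I_0`. -/
noncomputable def multThreshold {l : ℕ} (d : ℕ) (c : Fin l → ℕ) (p : Fin l) : ℕ :=
  if psum c p = 0 then {q | psum c q = d}.ncard + {q | psum c q = 0 ∧ q ≤ p}.ncard
  else {q | psum c q = psum c p ∧ q ≤ p}.ncard

namespace IsAdmissible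

variable {l d : ℕ} {c : Fin l → ℕ} {C D : Fin l → ℕ → ℤ} (hD : IsAdmissible d c C D)
include hD

theorem range_subset_of_le_of_psum_eq {q p : Fin l} (hqp : q ≤ p) (hsum : psum c q = psum c p) :
    range (D p) ⊆ range (D q) := by
  obtain ⟨p, hp⟩ := p
  induction p with
  | zero => rw [show q = ⟨0, hp⟩ from Fin.ext (Nat.eq_zero_of_le_zero hqp)]
  | succ k ih =>
    rcases eq_or_ne q ⟨k + 1, hp⟩ with rfl | hne
    · exact le_rfl
    have hqk : q ≤ ⟨k, Nat.lt_of_succ_lt hp⟩ :=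
      Fin.le_def.2 (Nat.le_of_lt_succ (lt_of_le_of_ne (Fin.le_def.1 hqp) (Fin.val_ne_of_ne hne)))
    have hle := psum_mono c hqk
    have hstep := psum_succ c hp
    have hck : c ⟨k + 1, hp⟩ = 0 := by omega
    have hsucc : range (D ⟨k + 1, hp⟩) ⊆ range (D ⟨k, Nat.lt_of_succ_lt hp⟩) :=
      range_subset_iff.2 (hD.2.2.1 _ hck k.succ_ne_zero)
    exact hsucc.trans (ih _ hqk (by omega))

theorem sub_one_mem_range_of_psum_eq (hc : ∑ j, c j = d) {p q : Fin l} (hp : psum c p = 0)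
    (hq : psum c q = d) {z : ℤ} (hz : z ∈ range (D p)) : z - 1 ∈ range (D q) := by
  have hl : 0 < l := p.pos
  have h0p : (⟨0, hl⟩ : Fin l) ≤ p := Fin.le_def.2 (Nat.zero_le _)
  have hpsum0 : psum c ⟨0, hl⟩ = 0 := by have := psum_mono c h0p; omega
  have hc0 : c ⟨0, hl⟩ = 0 := by have := le_psum c ⟨0, hl⟩; omega
  obtain ⟨i, rfl⟩ := hD.range_subset_of_le_of_psum_eq h0p (hpsum0.trans hp.symm) hz
  obtain ⟨i', hi'⟩ := hD.2.2.2 hl hc0 i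
  refine hD.range_subset_of_le_of_psum_eq (Fin.le_def.2 (Nat.le_sub_one_of_lt q.isLt))
    ?_ ⟨i', hi'⟩
  rw [hq, psum_last c hl, hc]

theorem mem_range_iff (hc : ∑ j, c j = d) (p : Fin l) (z : ℤ) :
    z ∈ range (D p) ↔
      multThreshold d c p ≤ multAt d c D (psum c p) (if psum c p = 0 then z - 1 else z) := by
  have nested (t : ℕ) (w : ℤ) :
      ∀ q ∈ {q | psum c q = t}, ∀ p ∈ {p | psum c p = t ∧ w ∈ range (D p)}, q ≤ p →
        q ∈ {p | psum c p = t ∧ w ∈ range (D p)} :=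
    fun q hq p hp hqp => ⟨hq, hD.range_subset_of_le_of_psum_eq hqp (hq.trans hp.1.symm) hp.2⟩
  unfold multThreshold
  by_cases h0 : psum c p = 0
  · rw [if_pos h0, if_pos h0, h0, multAt_zero hD.1, sub_add_cancel,
      Nat.add_comm (ncard {q | psum c q = 0 ∧ z ∈ range (D q)})]
    refine (and_iff_right h0).symm.trans (mem_iff_add_ncard_le_add_ncard (fun q hq => hq.1)
      (nested 0 z) h0 (fun hz => ncard_le_ncard fun q hq => ⟨hq, ?_⟩)
      fun _ => ncard_le_ncard fun q hq => hq.1)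
    exact hD.sub_one_mem_range_of_psum_eq hc h0 hq hz.2
  rw [if_neg h0, if_neg h0]
  by_cases hd : psum c p = d
  · rw [← zero_add (ncard _), hd, multAt_self, multAt_zero hD.1]
    refine (and_iff_right hd).symm.trans (mem_iff_add_ncard_le_add_ncard (fun q hq => hq.1)
      (nested d z) hd (fun _ => Nat.zero_le _) fun hz => ?_)
    refine (ncard_eq_zero (toFinite _)).2 (eq_empty_of_forall_notMem fun q hq => hz ⟨hd, ?_⟩) |>.le
    simpa only [add_sub_cancel_right] using hD.sub_one_mem_range_of_psum_eq hc hq.1 hd hq.2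
  · rw [multAt_of_ne hD.1 h0 hd]
    simpa only [zero_add, mem_ofPred_eq] using (and_iff_right rfl).symm.trans
      (mem_iff_add_ncard_le_add_ncard (m := 0) (n := 0) (fun q hq => hq.1) (nested _ z) rfl
        (fun _ => le_rfl) fun _ => le_rfl)

end IsAdmissible

theorem statement5_general (l d : ℕ)
    (c : Fin l → ℕ) (hc : ∑ j, c j = d)
    (C : Fin l → ℕ → ℤ)
    (D D' : Fin l → ℕ → ℤ)
    (hD : IsAdmissible d c C D) (hD' : IsAdmissible d c C D') :
    ∀ p : Fin l, D p = D' p := by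
  intro p
  have ht : psum c p ≤ d := hc ▸ psum_le_sum c p
  refine ((hD.1 p).range_inj_of_wellFoundedLT (hD'.1 p)).1 (Set.ext fun z => ?_)
  rw [hD.mem_range_iff hc, hD'.mem_range_iff hc, hD.2.1 _ ht, hD'.2.1 _ ht]

/-- any two admissible tuples for an `l`-tuple `C` of strictly decreasing,
stabilising integer sequences coincide. -/
theorem statement5 (l d : ℕ) (hl : 1 ≤ l) (hd : 1 ≤ d)
    (c : Fin l → ℕ) (hc : ∑ j, c j = d)
    (C : Fin l → ℕ → ℤ)
    (hdec : ∀ p, StrictAnti (C p))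
    (hstab : ∀ p, ∃ rp : ℤ, Stabilises (C p) rp)
    (D D' : Fin l → ℕ → ℤ)
    (hD : IsAdmissible d c C D) (hD' : IsAdmissible d c C D') :
    ∀ p : Fin l, D p = D' p :=
  statement5_general l d c hc C D D' hD hD'
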